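/- In the n-mode CCR algebra, for K symmetric and f_1,…,f_m ∈ ℂ^{2n}, define the GKSL-adjoint action L†(X) = -(1/2)Σ_{j=1}^N [C_j,[C_j,X]] with C_j = (1/2)𝔞ᵀK_j𝔞, K_j = K_jᵀ. Then L†(Π_{l=1}^m f_lᵀ𝔞) = -(1/2)Σ_{j=1}^N Σ_{p=1}^m Σ_{i=1}^m Π_{l=1}^m f_lᵀ(JK_j)^{δ_{il}+δ_{pl}}𝔞. In particular, the span of degree-m products of linear forms is invariant under L†. -/

import Mathlib

/-!
Since the commutators `[a_k, a_s] = J_{sk}` are scalars and `K` is symmetric, `X ↦ [C, X]` for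
`C = ½ 𝔞ᵀK𝔞` sends the linear form `gᵀ𝔞` to `(gᵀJK)𝔞`. Being a derivation, it acts on a product
of linear forms factor by factor; applying it twice multiplies the factors `i` and `p` by `JK`,
the factor hit twice by `(JK)²`.
-/

open Matrix

theorem commutator_list_ofFn_prod {A : Type*} [Ring A] (c : A) :
    ∀ {m : ℕ} (v : Fin m → A), c * (List.ofFn v).prod - (List.ofFn v).prod * c
      = ∑ i, (List.ofFn (Function.update v i (c * v i - v i * c))).prod
  | 0, _ => by simp
  | m + 1, v => by
    have head : (List.ofFn (Function.update v 0 (c * v 0 - v 0 * c))).prod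
        = (c * v 0 - v 0 * c) * (List.ofFn fun l : Fin m => v l.succ).prod := by
      simp [List.ofFn_succ]
    have tail (j : Fin m) :
        (List.ofFn (Function.update v j.succ (c * v j.succ - v j.succ * c))).prod
          = v 0 * (List.ofFn (Function.update (fun l : Fin m => v l.succ) j
            (c * v j.succ - v j.succ * c))).prod := by
      rw [List.ofFn_succ, List.prod_cons, Function.update_of_ne (Fin.succ_ne_zero j).symm]
      exact congrArg (fun w => v 0 * (List.ofFn w).prod)
        (Function.update_comp_eq_of_injective v (Fin.succ_injective m) j _)
    rw [Fin.sum_univ_succ, head, Finset.sum_congr rfl fun j _ => tail j, ← Finset.mul_sum,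
      ← commutator_list_ofFn_prod c fun l => v l.succ, List.ofFn_succ, List.prod_cons]
    noncomm_ring

theorem commutator_list_ofFn_prod_vecMul_pow {ι R A : Type*} [Fintype ι] [DecidableEq ι]
    [CommSemiring R] [Ring A] {φ : (ι → R) → A} {c : A} {M : Matrix ι ι R}
    (hφ : ∀ g, c * φ g - φ g * c = φ (g ᵥ* M)) {m : ℕ} (f : Fin m → ι → R) (e : Fin m → ℕ) :
    c * (List.ofFn fun l => φ (f l ᵥ* M ^ e l)).prod
        - (List.ofFn fun l => φ (f l ᵥ* M ^ e l)).prod * c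
      = ∑ i, (List.ofFn fun l => φ (f l ᵥ* M ^ ((if i = l then 1 else 0) + e l))).prod := by
  rw [commutator_list_ofFn_prod]
  refine Finset.sum_congr rfl fun i _ => congrArg _ (congrArg _ (funext fun l => ?_))
  rcases eq_or_ne l i with rfl | hne
  · rw [Function.update_self, hφ, vecMul_vecMul, if_pos rfl, ← pow_succ, add_comm]
  · rw [Function.update_of_ne hne, if_neg hne.symm, zero_add]

theorem commutator_eq_fromBlocks_smul_one {ι R A : Type*} [DecidableEq ι] [CommRing R] [Ring A]
    [Algebra R A] (a : ι ⊕ ι → A)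
    (hccr : ∀ i j, a (Sum.inl i) * a (Sum.inr j) - a (Sum.inr j) * a (Sum.inl i)
      = if i = j then 1 else 0)
    (hcomm_ann : ∀ i j, a (Sum.inl i) * a (Sum.inl j) = a (Sum.inl j) * a (Sum.inl i))
    (hcomm_cre : ∀ i j, a (Sum.inr i) * a (Sum.inr j) = a (Sum.inr j) * a (Sum.inr i))
    (k s : ι ⊕ ι) :
    a k * a s - a s * a k = (fromBlocks 0 (-1) 1 0 : Matrix (ι ⊕ ι) (ι ⊕ ι) R) s k • (1 : A) := by
  rcases k with i | i <;> rcases s with j | j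
  · simp [hcomm_ann i j]
  · simp [hccr i j, one_apply, eq_comm]
  · rw [← neg_sub, hccr j i]
    simp [one_apply, eq_comm]
  · simp [hcomm_cre i j]

section ScalarCommutators

variable {ι R A : Type*} [CommRing R] [Ring A] [Algebra R A]
  {a : ι → A} {Ω : Matrix ι ι R}

theorem mul_mul_commutator_of_commutator_eq_smul_one
    (hΩ : ∀ k s, a k * a s - a s * a k = Ω s k • (1 : A)) (k l s : ι) :
    a k * a l * a s - a s * (a k * a l) = Ω s l • a k + Ω s k • a l := by
  calc a k * a l * a s - a s * (a k * a l)
      = a k * (a l * a s - a s * a l) + (a k * a s - a s * a k) * a l := by noncomm_ring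
    _ = Ω s l • a k + Ω s k • a l := by simp [hΩ]

theorem quadForm_commutator_linForm [Fintype ι]
    (hΩ : ∀ k s, a k * a s - a s * a k = Ω s k • (1 : A))
    {K : Matrix ι ι R} (hK : Kᵀ = K) (g : ι → R) :
    (∑ k, ∑ l, K k l • (a k * a l)) * (∑ s, g s • a s)
      - (∑ s, g s • a s) * (∑ k, ∑ l, K k l • (a k * a l))
      = (2 : R) • ∑ t, (g ᵥ* (Ω * K)) t • a t := by
  have expand : (∑ k, ∑ l, K k l • (a k * a l)) * (∑ s, g s • a s)
      - (∑ s, g s • a s) * (∑ k, ∑ l, K k l • (a k * a l))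
      = ∑ k, ∑ l, ∑ s, (K k l * g s) • (a k * a l * a s - a s * (a k * a l)) := by
    simp only [Finset.sum_mul, Finset.mul_sum, smul_mul_smul_comm, smul_sub, Finset.sum_sub_distrib]
    congr 1
    · rw [Finset.sum_comm]
      exact Finset.sum_congr rfl fun k _ => Finset.sum_comm
    · simp only [mul_comm (g _)]
  have coeff (t : ι) : (g ᵥ* (Ω * K)) t = ∑ u, ∑ s, K u t * g s * Ω s u := by
    simp only [vecMul, dotProduct, mul_apply, Finset.mul_sum]
    rw [Finset.sum_comm]
    exact Finset.sum_congr rfl fun u _ => Finset.sum_congr rfl fun s _ => by ring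
  have hKsymm (k l : ι) : K l k = K k l := congrFun (congrFun hK k) l
  rw [expand]
  simp only [mul_mul_commutator_of_commutator_eq_smul_one hΩ, smul_add, smul_smul,
    Finset.sum_add_distrib, two_smul, coeff, Finset.sum_smul]
  congr 1
  · simp only [hKsymm]
  · rw [Finset.sum_comm]

end ScalarCommutators

/-- Action of the GKSL-adjoint generator on a product of linear forms:
`L†(Π_l f_lᵀ𝔞) = -(1/2)Σ_j Σ_p Σ_i Π_l f_lᵀ(JK_j)^{δ_{il}+δ_{pl}}𝔞`. -/
theorem gksl_adjoint_on_products_of_linear_forms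
    {A : Type*} [Ring A] [Algebra ℂ A] (n m N : ℕ)
    (a : (Fin n ⊕ Fin n) → A)
    (hccr : ∀ i j : Fin n,
      a (Sum.inl i) * a (Sum.inr j) - a (Sum.inr j) * a (Sum.inl i)
        = if i = j then 1 else 0)
    (hcomm_ann : ∀ i j : Fin n, a (Sum.inl i) * a (Sum.inl j) = a (Sum.inl j) * a (Sum.inl i))
    (hcomm_cre : ∀ i j : Fin n, a (Sum.inr i) * a (Sum.inr j) = a (Sum.inr j) * a (Sum.inr i))
    (K : Fin N → Matrix (Fin n ⊕ Fin n) (Fin n ⊕ Fin n) ℂ) (hK : ∀ j, (K j)ᵀ = K j)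
    (f : Fin m → (Fin n ⊕ Fin n) → ℂ) :
    let J : Matrix (Fin n ⊕ Fin n) (Fin n ⊕ Fin n) ℂ := Matrix.fromBlocks 0 (-1) 1 0
    let lf : ((Fin n ⊕ Fin n) → ℂ) → A := fun g => ∑ k, g k • a k
    let C : Fin N → A := fun j => (1/2 : ℂ) • ∑ k, ∑ l, K j k l • (a k * a l)
    let Ldag : A → A := fun X =>
      (-(1/2 : ℂ)) • ∑ j, (C j * (C j * X - X * C j) - (C j * X - X * C j) * C j)
    Ldag ((List.ofFn fun l : Fin m => lf (f l)).prod)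
      = (-(1/2 : ℂ)) • ∑ j : Fin N, ∑ p : Fin m, ∑ i : Fin m,
          (List.ofFn fun l : Fin m =>
            lf (Matrix.vecMul (f l)
              ((J * K j) ^ ((if i = l then 1 else 0) + (if p = l then 1 else 0))))).prod := by
  intro J lf C Ldag
  have hC (j : Fin N) (g : Fin n ⊕ Fin n → ℂ) :
      C j * lf g - lf g * C j = lf (g ᵥ* (J * K j)) := by
    rw [smul_mul_assoc, mul_smul_comm, ← smul_sub, quadForm_commutator_linForm
      (commutator_eq_fromBlocks_smul_one a hccr hcomm_ann hcomm_cre) (hK j), smul_smul,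
      one_div, inv_mul_cancel₀ two_ne_zero, one_smul]
  -- written with exponent `0` so that both brackets are instances of the same lemma
  have hpow0 (j : Fin N) : (List.ofFn fun l => lf (f l)).prod
      = (List.ofFn fun l => lf (f l ᵥ* (J * K j) ^ (0 : Fin m → ℕ) l)).prod := by
    simp
  show (-(1/2 : ℂ)) • ∑ j, _ = _
  congr 1
  refine Finset.sum_congr rfl fun j _ => ?_
  rw [hpow0 j, commutator_list_ofFn_prod_vecMul_pow (hC j), Finset.mul_sum, Finset.sum_mul,
    ← Finset.sum_sub_distrib]
  refine Finset.sum_congr rfl fun p _ => ?_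
  rw [commutator_list_ofFn_prod_vecMul_pow (hC j)]
  simp only [Pi.zero_apply, add_zero]
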